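/- Let N ≥ 2 and x ∈ ℝ^N with x_N > 0. As |y| → ∞ with y_N > 0, the Green function G^x(y) of -Δ on the upper half-space satisfies G^x(y)·|y|^N / y_N → C'_N x_N, where C'_N = 2/σ_N. Moreover this convergence is uniform in x over bounded sets. -/

import Mathlib

open Filter

/-- Surface measure of the unit sphere in `ℝ^N`: `σ_N = 2 π^(N/2) / Γ(N/2)`. -/
noncomputable def sigmaN (N : ℕ) : ℝ := 2 * Real.pi ^ ((N : ℝ) / 2) / Real.Gamma ((N : ℝ) / 2)

/-- `C_N⁻¹ = σ_N max{N-2, 1}`. -/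
noncomputable def constCN (N : ℕ) : ℝ := 1 / (sigmaN N * max ((N : ℝ) - 2) 1)

/-- `C'_N = 2 / σ_N`. -/
noncomputable def constC'N (N : ℕ) : ℝ := 2 / sigmaN N

/-- Reflection of a point of `ℝ^N` across the hyperplane `{x_N = 0}`. -/
noncomputable def reflectPt {N : ℕ} (x : EuclideanSpace ℝ (Fin N)) :
    EuclideanSpace ℝ (Fin N) :=
  WithLp.toLp 2 (fun i => if i.val = N - 1 then -(x i) else x i)

/-- Regularized fundamental solution of `-Δ` on `ℝ^N`. -/
noncomputable def GammaEps (N : ℕ) (ε : ℝ) (x y : EuclideanSpace ℝ (Fin N)) : ℝ :=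
  if N = 2 then -(constCN 2 / 2) * Real.log (ε ^ 2 + ‖x - y‖ ^ 2)
  else constCN N * (ε ^ 2 + ‖x - y‖ ^ 2) ^ (-(((N : ℝ) - 2) / 2))

/-- Regularized Green function of `-Δ` on the half-space, via reflection. -/
noncomputable def GEps (N : ℕ) (ε : ℝ) (x y : EuclideanSpace ℝ (Fin N)) : ℝ :=
  GammaEps N ε x y - GammaEps N ε (reflectPt x) y

lemma sigmaN_pos (N : ℕ) (hN : 2 ≤ N) : 0 < sigmaN N := by
  have h1 : (0:ℝ) < (N:ℝ)/2 := by positivity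
  have := Real.Gamma_pos_of_pos h1
  have := Real.rpow_pos_of_pos Real.pi_pos ((N:ℝ)/2)
  unfold sigmaN
  positivity

lemma coord_abs_le_norm {N : ℕ} (x : EuclideanSpace ℝ (Fin N)) (i : Fin N) : |x i| ≤ ‖x‖ := by
  have h := PiLp.norm_sq_eq_of_L2 (fun _ : Fin N => ℝ) x
  have h2 : |x i|^2 ≤ ‖x‖^2 := by
    rw [h]
    have : ‖x i‖^2 ≤ ∑ j, ‖x j‖^2 :=
      Finset.single_le_sum (f := fun j => ‖x j‖^2) (fun j _ => by positivity)
        (Finset.mem_univ i)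
    simpa using this
  exact (pow_le_pow_iff_left₀ (abs_nonneg _) (norm_nonneg _) two_ne_zero).mp h2

lemma reflect_norm_sq {N : ℕ} (hN : 1 ≤ N) (x y : EuclideanSpace ℝ (Fin N)) :
    ‖reflectPt x - y‖^2 = ‖x - y‖^2
      + 4 * x ⟨N-1, by omega⟩ * y ⟨N-1, by omega⟩ := by
  have h1 := PiLp.norm_sq_eq_of_L2 (fun _ : Fin N => ℝ) (reflectPt x - y)
  have h2 := PiLp.norm_sq_eq_of_L2 (fun _ : Fin N => ℝ) (x - y)
  rw [h1, h2]
  set i0 : Fin N := ⟨N-1, by omega⟩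
  have key : ∀ j : Fin N, ‖(reflectPt x - y) j‖^2 =
      ‖(x - y) j‖^2 + (if j = i0 then 4 * x i0 * y i0 else 0) := by
    intro j
    simp only [PiLp.sub_apply, reflectPt, PiLp.toLp_apply, Real.norm_eq_abs, sq_abs]
    by_cases hj : j = i0
    · subst hj
      have hv : (i0.val = N - 1) := rfl
      simp only [if_pos hv, if_true]
      ring
    · have : ¬ (j.val = N - 1) := by
        intro h; apply hj; exact Fin.ext h
      simp [this, hj]
  simp only [key, Finset.sum_add_distrib, Finset.sum_ite_eq', Finset.mem_univ, if_pos]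

noncomputable def gfun (N : ℕ) (z : ℝ) : ℝ :=
  if N = 2 then -(constCN 2 / 2) * Real.log z else constCN N * z ^ (-(((N : ℝ) - 2) / 2))

lemma GEps_eq (N : ℕ) (x y : EuclideanSpace ℝ (Fin N)) :
    GEps N 0 x y = gfun N (‖x - y‖^2) - gfun N (‖reflectPt x - y‖^2) := by
  simp [GEps, GammaEps, gfun]

lemma mvt_core (N : ℕ) (hN : 2 ≤ N) {a b : ℝ} (ha : 0 < a) (hab : a < b) :
    ∃ ξ ∈ Set.Ioo a b,
      gfun N a - gfun N b = constC'N N / 4 * (b - a) * ((Real.sqrt ξ)⁻¹) ^ N := by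
  have hσ := sigmaN_pos N hN
  by_cases h2 : N = 2
  · subst h2
    obtain ⟨ξ, hξ, hslope⟩ := exists_hasDerivAt_eq_slope Real.log (fun z => z⁻¹) hab
      (Real.continuousOn_log.mono (fun z hz => ne_of_gt (lt_of_lt_of_le ha hz.1)))
      (fun z hz => Real.hasDerivAt_log (ne_of_gt (ha.trans hz.1)))
    refine ⟨ξ, hξ, ?_⟩
    have hξ0 : 0 < ξ := ha.trans hξ.1
    have hs : (Real.sqrt ξ)⁻¹ ^ 2 = ξ⁻¹ := by
      rw [← Real.sqrt_sq hξ0.le] ; rw [Real.sqrt_sq hξ0.le]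
      rw [inv_pow, Real.sq_sqrt hξ0.le]
    have hlog : Real.log b - Real.log a = (b - a) * ξ⁻¹ := by
      have hba : b - a ≠ 0 := by linarith
      have hξne : ξ ≠ 0 := ne_of_gt hξ0
      field_simp at hslope ⊢
      linarith [hslope]
    have hC : constCN 2 / 2 = constC'N 2 / 4 := by
      unfold constCN constC'N
      norm_num
      ring
    simp only [gfun, if_pos rfl, if_true]
    rw [hs]
    linear_combination (constC'N 2 / 4) * hlog + (Real.log b - Real.log a) * hC
  · -- N ≥ 3
    have hN3 : 3 ≤ N := by omega
    set α : ℝ := ((N : ℝ) - 2) / 2 with hα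
    have hα0 : 0 < α := by
      have : (3:ℝ) ≤ (N:ℝ) := by exact_mod_cast hN3
      rw [hα]; linarith
    obtain ⟨ξ, hξ, hslope⟩ := exists_hasDerivAt_eq_slope
      (fun z : ℝ => z ^ (-α)) (fun z => (-α) * z ^ (-α - 1)) hab
      (fun z hz => ((Real.hasDerivAt_rpow_const
        (Or.inl (ne_of_gt (lt_of_lt_of_le ha hz.1)))).continuousAt).continuousWithinAt)
      (fun z hz => Real.hasDerivAt_rpow_const (Or.inl (ne_of_gt (ha.trans hz.1))))
    refine ⟨ξ, hξ, ?_⟩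
    have hξ0 : 0 < ξ := ha.trans hξ.1
    have hinv : ((Real.sqrt ξ)⁻¹) ^ N = ξ ^ (-α - 1) := by
      have h1 : (Real.sqrt ξ) ^ N = ξ ^ ((N : ℝ) / 2) := by
        rw [Real.sqrt_eq_rpow, ← Real.rpow_natCast (ξ ^ ((1:ℝ)/2)) N,
          ← Real.rpow_mul hξ0.le]
        ring_nf
      rw [inv_pow, h1, ← Real.rpow_neg hξ0.le]
      congr 1
      rw [hα]; ring
    have hba : b - a ≠ 0 := by linarith
    have hsl : a ^ (-α) - b ^ (-α) = α * ξ ^ (-α - 1) * (b - a) := by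
      rw [eq_div_iff hba] at hslope
      linear_combination hslope
    simp only [gfun, if_neg h2]
    rw [hinv]
    have hCα : constCN N * α = constC'N N / 4 := by
      have hmax : max ((N : ℝ) - 2) 1 = (N : ℝ) - 2 := by
        have : (3:ℝ) ≤ (N:ℝ) := by exact_mod_cast hN3
        apply max_eq_left; linarith
      have hne : (N:ℝ) - 2 ≠ 0 := by
        have : (3:ℝ) ≤ (N:ℝ) := by exact_mod_cast hN3
        intro h; linarith
      unfold constCN constC'N
      rw [hmax, hα]
      field_simp
      ring
    linear_combination constCN N * hsl + (ξ ^ (-α - 1) * (b - a)) * hCα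

lemma tendsto_ratio_pow (N : ℕ) (c : ℝ) :
    Tendsto (fun r : ℝ => (r / (r + c)) ^ N) atTop (nhds 1) := by
  have h0 : Tendsto (fun r : ℝ => 1 + c * r⁻¹) atTop (nhds 1) := by
    have h := tendsto_inv_atTop_zero.const_mul c
    simpa using tendsto_const_nhds.add h
  have h1 : Tendsto (fun r : ℝ => ((1 + c * r⁻¹)⁻¹) ^ N) atTop (nhds 1) := by
    have := (h0.inv₀ one_ne_zero).pow N
    simpa using this
  apply h1.congr'
  filter_upwards [eventually_gt_atTop (max 0 (-c))] with r hr
  have hr0 : 0 < r := lt_of_le_of_lt (le_max_left _ _) hr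
  have hrc : 0 < r + c := by
    have := lt_of_le_of_lt (le_max_right _ _) hr
    linarith
  field_simp


/-- Asymptotics of the half-space Green function: `G^x(y) |y|^N / y_N → C'_N x_N`
as `|y| → ∞`, `y_N > 0`, uniformly for `x` in bounded subsets of the half-space. -/
theorem stmt_8 (N : ℕ) (hN : 2 ≤ N) :
    ∀ M > (0 : ℝ), ∀ δ > (0 : ℝ), ∃ R > (0 : ℝ),
      ∀ x y : EuclideanSpace ℝ (Fin N),
        ‖x‖ ≤ M → 0 < x ⟨N - 1, by omega⟩ → 0 < y ⟨N - 1, by omega⟩ → R ≤ ‖y‖ →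
        |GEps N 0 x y * ‖y‖ ^ N / y ⟨N - 1, by omega⟩ -
            constC'N N * x ⟨N - 1, by omega⟩| < δ := by
  intro M hM δ hδ
  have hσ := sigmaN_pos N hN
  have hC' : 0 < constC'N N := by unfold constC'N; positivity
  set ε' : ℝ := δ / (constC'N N * M) with hε'def
  have hε' : 0 < ε' := by positivity
  -- eventual bounds
  have hf := tendsto_ratio_pow N (-M)
  have hg := tendsto_ratio_pow N (3 * M)
  have hfe : ∀ᶠ r : ℝ in atTop, |(r / (r + -M)) ^ N - 1| < ε' := by
    have := hf (Metric.ball_mem_nhds (1:ℝ) hε')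
    filter_upwards [this] with r hr
    simpa [Real.dist_eq] using hr
  have hge : ∀ᶠ r : ℝ in atTop, |(r / (r + 3 * M)) ^ N - 1| < ε' := by
    have := hg (Metric.ball_mem_nhds (1:ℝ) hε')
    filter_upwards [this] with r hr
    simpa [Real.dist_eq] using hr
  obtain ⟨R0, hR0⟩ := eventually_atTop.mp ((hfe.and hge).and (eventually_ge_atTop (M + 1)))
  refine ⟨max R0 (M + 1), by positivity, ?_⟩
  intro x y hx hxN hyN hy
  set i0 : Fin N := ⟨N - 1, by omega⟩
  set r : ℝ := ‖y‖ with hr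
  have hrR0 : R0 ≤ r := le_trans (le_max_left _ _) hy
  obtain ⟨⟨hfr, hgr⟩, hrM⟩ := hR0 r hrR0
  have hr0 : 0 < r := by linarith
  set t : ℝ := y i0 with ht
  set xN : ℝ := x i0 with hxNdef
  have hxNM : xN ≤ M := le_trans (le_trans (le_abs_self _) (coord_abs_le_norm x i0)) hx
  have htr : t ≤ r := le_trans (le_abs_self _) (coord_abs_le_norm y i0)
  set a : ℝ := ‖x - y‖ ^ 2 with ha
  set b : ℝ := ‖reflectPt x - y‖ ^ 2 with hb
  have hbeq : b = a + 4 * xN * t := reflect_norm_sq (by omega) x y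
  -- bounds on a and b
  have hxy_lb : r - M ≤ ‖x - y‖ := by
    have h1 : ‖y‖ - ‖x‖ ≤ ‖x - y‖ := by
      have := norm_sub_norm_le y x
      rw [norm_sub_rev] at this
      linarith [this]
    linarith
  have hxy_ub : ‖x - y‖ ≤ r + M := by
    have := norm_sub_le x y
    linarith
  have hrM0 : 0 < r - M := by linarith
  have ha_lb : (r - M) ^ 2 ≤ a := by
    rw [ha]; exact pow_le_pow_left₀ hrM0.le hxy_lb 2
  have ha_ub : a ≤ (r + M) ^ 2 := by
    rw [ha]; exact pow_le_pow_left₀ (norm_nonneg _) hxy_ub 2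
  have ha0 : 0 < a := lt_of_lt_of_le (by positivity) ha_lb
  have hab : a < b := by
    rw [hbeq]; nlinarith [hxN, hyN]
  have hb_ub : b < (r + 3 * M) ^ 2 := by
    rw [hbeq]; nlinarith
  -- MVT
  obtain ⟨ξ, hξ, hval⟩ := mvt_core N hN ha0 hab
  set s : ℝ := Real.sqrt ξ with hs
  have hξ0 : 0 < ξ := ha0.trans hξ.1
  have hs_lb : r - M ≤ s := by
    rw [hs]
    calc r - M = Real.sqrt ((r - M)^2) := (Real.sqrt_sq hrM0.le).symm
      _ ≤ Real.sqrt ξ := Real.sqrt_le_sqrt (le_of_lt (lt_of_le_of_lt ha_lb hξ.1))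
  have hs_ub : s < r + 3 * M := by
    rw [hs]
    calc Real.sqrt ξ < Real.sqrt ((r + 3*M)^2) :=
          Real.sqrt_lt_sqrt hξ0.le (lt_trans hξ.2 hb_ub)
      _ = r + 3 * M := Real.sqrt_sq (by linarith)
  have hs0 : 0 < s := lt_of_lt_of_le hrM0 hs_lb
  -- main expression
  have hexpr : GEps N 0 x y * r ^ N / t - constC'N N * xN
      = constC'N N * xN * ((r / s) ^ N - 1) := by
    rw [GEps_eq, ← ha, ← hb, hval, hbeq]
    have htne : t ≠ 0 := ne_of_gt hyN
    have hsne : s ≠ 0 := ne_of_gt hs0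
    rw [div_pow, inv_pow]
    field_simp
    ring
  rw [hexpr]
  -- bound on (r/s)^N - 1
  have hq1 : (r / s) ^ N ≤ (r / (r - M)) ^ N := by
    apply pow_le_pow_left₀ (by positivity)
    exact div_le_div_of_nonneg_left hr0.le hrM0 hs_lb  -- check name
  have hq2 : (r / (r + 3 * M)) ^ N ≤ (r / s) ^ N := by
    apply pow_le_pow_left₀ (by positivity)
    exact div_le_div_of_nonneg_left hr0.le hs0 hs_ub.le
  have habs : |(r / s) ^ N - 1| < ε' := by
    rw [abs_lt]
    constructor
    · have : -(ε') < (r / (r + 3 * M)) ^ N - 1 := by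
        have := abs_lt.mp hgr
        linarith [this.1]
      linarith
    · have : (r / (r - M)) ^ N - 1 < ε' := by
        have := abs_lt.mp hfr
        have h' : (r / (r + -M)) ^ N = (r / (r - M)) ^ N := by rw [← sub_eq_add_neg]
        rw [h'] at this
        linarith [this.2]
      linarith
  calc |constC'N N * xN * ((r / s) ^ N - 1)|
      = constC'N N * xN * |(r / s) ^ N - 1| := by
        rw [abs_mul, abs_of_pos (by positivity)]
    _ ≤ constC'N N * M * |(r / s) ^ N - 1| := by
        apply mul_le_mul_of_nonneg_right _ (abs_nonneg _)
        exact mul_le_mul_of_nonneg_left hxNM hC'.le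
    _ < constC'N N * M * ε' := by
        exact mul_lt_mul_of_pos_left habs (by positivity)
    _ = δ := by
        rw [hε'def]
        field_simp
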